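/- arXiv:1709.00222 — 4 statements merged into one kernel-verified Lean document; each statement's English description precedes it below -/
import Mathlib

section
/- Let G be a finite group, let E be a finite-dimensional real vector space, and let K be a simplicial complex in E with only finitely many faces, with underlying space |K| (the union of the convex hulls of its faces). Let ρ be an action of G on E by affine automorphisms such that for every g ∈ G the image under ρ(g) of every face of K is again a face of K, the induced action on |K| is free (ρ(g)x ≠ x for every x ∈ |K| and every g ≠ 1), and for every g ≠ 1 and every face s of K the image under ρ(g) of the relative (intrinsic) interior of the convex hull of s is disjoint from that relative interior. Let (μₙ)ₙ∈ℕ be a sequence of finite Borel measures on E. Then there exists a subset U of |K|, open in the subspace topology of |K|, such that ρ(g)(U) ∩ ρ(h)(U) = ∅ whenever g, h ∈ G with g ≠ h, and μₙ(|K| \ ⋃_{g∈G} ρ(g)(U)) = 0 for every n ∈ ℕ. -/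
open MeasureTheory Set Pointwise

/-! A generic linear functional `ℓ` separates the points `g x`, `g ∈ G`, of every orbit in `|K|`
(the action is free there) outside a set that is null for all the countably many measures `μₙ`:
for a fixed `x` and `g ≠ h`, the functionals with `ℓ (g x) = ℓ (h x)` form a hyperplane of the
dual space, so Fubini makes the set of ties null for Haar-almost every `ℓ`. The points of `|K|` at
which `ℓ` attains a strict maximum on their orbit then form a relatively open set whose translates
are pairwise disjoint and contain every orbit without ties. -/

instance AffineEquiv.applyMulAction {k V P : Type*} [Ring k] [AddCommGroup V] [Module k V]
    [AddTorsor V P] : MulAction (P ≃ᵃ[k] P) P where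
  smul e p := e p
  one_smul _ := rfl
  mul_smul _ _ _ := rfl

namespace Geometry.SimplicialComplex

variable {E : Type*} [NormedAddCommGroup E] [NormedSpace ℝ E] (K : SimplicialComplex ℝ E)

theorem isClosed_space_of_finite (hK : K.faces.Finite) : IsClosed K.space :=
  hK.isClosed_biUnion fun s _ => (s.finite_toSet.isCompact_convexHull ℝ).isClosed

theorem mapsTo_space [DecidableEq E] {f : E →ᵃ[ℝ] E}
    (hf : ∀ s ∈ K.faces, s.image f ∈ K.faces) : MapsTo f K.space K.space := by
  intro x hx
  obtain ⟨s, hs, hxs⟩ := K.mem_space_iff.1 hx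
  refine K.mem_space_iff.2 ⟨s.image f, hf s hs, ?_⟩
  rw [Finset.coe_image, ← f.image_convexHull]
  exact mem_image_of_mem f hxs

end Geometry.SimplicialComplex

section OrbitStrictMax

variable (G : Type*) {X β : Type*} [Group G] [MulAction G X] [LinearOrder β]

def orbitStrictMaxSet (φ : X → β) : Set X :=
  {x | ∀ g : G, g ≠ 1 → φ (g • x) < φ x}

variable {G} {φ : X → β}

theorem disjoint_smul_orbitStrictMaxSet {g h : G} (hgh : g ≠ h) :
    Disjoint (g • orbitStrictMaxSet G φ) (h • orbitStrictMaxSet G φ) := by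
  rw [Set.disjoint_left]
  rintro _ ⟨a, ha, rfl⟩ ⟨b, hb, hba : h • b = g • a⟩
  have hb_eq : (h⁻¹ * g) • a = b := by rw [mul_smul, ← hba, inv_smul_smul]
  have ha_eq : (g⁻¹ * h) • b = a := by rw [mul_smul, hba, inv_smul_smul]
  have hab := hb_eq ▸ ha (h⁻¹ * g) (by rwa [ne_eq, inv_mul_eq_one, eq_comm])
  have hba' := ha_eq ▸ hb (g⁻¹ * h) (by rwa [ne_eq, inv_mul_eq_one])
  exact hab.asymm hba'

theorem isOpen_orbitStrictMaxSet [Finite G] [TopologicalSpace X] [ContinuousConstSMul G X]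
    [TopologicalSpace β] [OrderClosedTopology β] (hφ : Continuous φ) :
    IsOpen (orbitStrictMaxSet G φ) := by
  simp only [orbitStrictMaxSet, ofPred_forall]
  exact isOpen_iInter_of_finite fun g => isOpen_iInter_of_finite fun _ =>
    isOpen_lt (hφ.comp (continuous_const_smul g)) hφ

theorem exists_smul_mem_orbitStrictMaxSet [Finite G] {x : X}
    (hx : ∀ g h : G, g ≠ h → φ (g • x) ≠ φ (h • x)) :
    ∃ g : G, g • x ∈ orbitStrictMaxSet G φ := by
  obtain ⟨g₀, hg₀⟩ := Finite.exists_max fun g : G => φ (g • x)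
  refine ⟨g₀, fun k hk => ?_⟩
  rw [smul_smul]
  exact (hg₀ (k * g₀)).lt_of_ne (hx _ _ (by rwa [ne_eq, mul_eq_right]))

theorem diff_iUnion_smul_orbitStrictMaxSet_inter_subset [Finite G] {A : Set X}
    (hA : ∀ g : G, MapsTo (g • ·) A A) :
    A \ ⋃ g : G, g • (orbitStrictMaxSet G φ ∩ A) ⊆
      ⋃ (g : G) (h : G) (_ : g ≠ h), {x | x ∈ A ∧ φ (g • x) = φ (h • x)} := by
  rintro x ⟨hxA, hxU⟩
  by_contra hties
  simp only [mem_iUnion, mem_ofPred_eq, not_exists, not_and] at hties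
  obtain ⟨g, hg⟩ := exists_smul_mem_orbitStrictMaxSet fun g h hgh => hties g h hgh hxA
  exact hxU (mem_iUnion.2 ⟨g⁻¹, g • x, ⟨hg, hA g hxA⟩, inv_smul_smul g x⟩)

end OrbitStrictMax

section GenericFunctional

variable {E X : Type*} [NormedAddCommGroup E] [NormedSpace ℝ E] [FiniteDimensional ℝ E]
  [MeasurableSpace E] [BorelSpace E] [MeasurableSpace X]

theorem ae_measure_setOf_apply_eq_zero
    [MeasurableSpace (E →L[ℝ] ℝ)] [BorelSpace (E →L[ℝ] ℝ)]
    (ν : Measure (E →L[ℝ] ℝ)) [ν.IsAddHaarMeasure] (μ : Measure X) [SFinite μ] {S : Set X}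
    (hS : MeasurableSet S) {v : X → E} (hv : Measurable v) (hv0 : ∀ x ∈ S, v x ≠ 0) :
    ∀ᵐ ℓ ∂ν, μ {x | x ∈ S ∧ ℓ (v x) = 0} = 0 := by
  set T : Set ((E →L[ℝ] ℝ) × X) := {p | p.2 ∈ S ∧ p.1 (v p.2) = 0}
  have hT : MeasurableSet T := by
    have heval : Measurable fun p : (E →L[ℝ] ℝ) × X => p.1 (v p.2) :=
      isBoundedBilinearMap_apply.continuous.measurable.comp
        (measurable_fst.prodMk (hv.comp measurable_snd))
    exact (measurable_snd hS).inter (measurableSet_eq_fun heval measurable_const)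
  have hsection : ∀ x, ν ((·, x) ⁻¹' T) = 0 := by
    intro x
    by_cases hx : x ∈ S
    · let evalAt : (E →L[ℝ] ℝ) →ₗ[ℝ] ℝ := ContinuousLinearMap.apply ℝ ℝ (v x)
      have hker : LinearMap.ker evalAt ≠ ⊤ := by
        obtain ⟨f, hf⟩ := SeparatingDual.exists_ne_zero (R := ℝ) (hv0 x hx)
        exact fun htop => hf (htop ▸ Submodule.mem_top : f ∈ LinearMap.ker evalAt)
      exact measure_mono_null (fun ℓ hℓ => hℓ.2) (Measure.addHaar_submodule ν _ hker)
    · simp [T, hx]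
  have hprod : ν.prod μ T = 0 := by
    simp [Measure.prod_apply_symm hT, hsection]
  exact (Measure.measure_prod_null hT).1 hprod

theorem exists_forall_measure_setOf_apply_eq_zero {ι : Type*} [Countable ι]
    (μ : ι → Measure X) [∀ i, SFinite (μ i)] {S : ι → Set X}
    (hS : ∀ i, MeasurableSet (S i))
    {v : ι → X → E} (hv : ∀ i, Measurable (v i)) (hv0 : ∀ i, ∀ x ∈ S i, v i x ≠ 0) :
    ∃ ℓ : E →L[ℝ] ℝ, ∀ i, μ i {x | x ∈ S i ∧ ℓ (v i x) = 0} = 0 := by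
  let _ : MeasurableSpace (E →L[ℝ] ℝ) := borel _
  have _ : BorelSpace (E →L[ℝ] ℝ) := ⟨rfl⟩
  exact (ae_all_iff.2 fun i =>
    ae_measure_setOf_apply_eq_zero Measure.addHaar (μ i) (hS i) (hv i) (hv0 i)).exists

end GenericFunctional

theorem stmt0_general {G : Type*} [Group G] [Finite G]
    {E : Type*} [NormedAddCommGroup E] [NormedSpace ℝ E] [FiniteDimensional ℝ E]
    [MeasurableSpace E] [BorelSpace E] [DecidableEq E]
    (K : Geometry.SimplicialComplex ℝ E) (hKfin : K.faces.Finite)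
    (ρ : G →* (E ≃ᵃ[ℝ] E))
    (hfaces : ∀ g : G, ∀ s ∈ K.faces, s.image (ρ g) ∈ K.faces)
    (hfree : ∀ g : G, g ≠ 1 → ∀ x ∈ K.space, ρ g x ≠ x)
    (μ : ℕ → Measure E) (hμ : ∀ n, IsFiniteMeasure (μ n)) :
    ∃ U : Set E, U ⊆ K.space ∧ (∃ V : Set E, IsOpen V ∧ U = V ∩ K.space) ∧
      (∀ g h : G, g ≠ h → (ρ g) '' U ∩ (ρ h) '' U = ∅) ∧
      ∀ n : ℕ, μ n (K.space \ ⋃ g : G, (ρ g) '' U) = 0 := by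
  let _ : MulAction G E := MulAction.compHom E ρ
  have _ : ContinuousConstSMul G E :=
    ⟨fun g => (ρ g).toAffineMap.continuous_of_finiteDimensional⟩
  have _ := hμ
  have hKinv (g : G) : MapsTo (g • ·) K.space K.space :=
    K.mapsTo_space (f := (ρ g).toAffineMap) (hfaces g)
  have hsep (p : {p : G × G // p.1 ≠ p.2}) (x : E) (hx : x ∈ K.space) :
      p.1.1 • x - p.1.2 • x ≠ 0 := by
    intro hx0
    refine hfree (p.1.2⁻¹ * p.1.1) (mt inv_mul_eq_one.1 (Ne.symm p.2)) x hx ?_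
    exact (mul_smul _ _ x).trans (inv_smul_eq_iff.2 (sub_eq_zero.1 hx0))
  obtain ⟨ℓ, hℓ⟩ := exists_forall_measure_setOf_apply_eq_zero
    (fun i : ℕ × {p : G × G // p.1 ≠ p.2} => μ i.1)
    (fun _ => (K.isClosed_space_of_finite hKfin).measurableSet)
    (v := fun i x => i.2.1.1 • x - i.2.1.2 • x)
    (fun i => ((continuous_const_smul _).sub (continuous_const_smul _)).measurable)
    (fun i => hsep i.2)
  refine ⟨orbitStrictMaxSet G ℓ ∩ K.space, inter_subset_right,
    ⟨_, isOpen_orbitStrictMaxSet ℓ.continuous, rfl⟩, fun g h hgh => ?_, fun n => ?_⟩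
  · exact ((disjoint_smul_orbitStrictMaxSet hgh).mono (image_mono inter_subset_left)
      (image_mono inter_subset_left)).inter_eq
  · refine measure_mono_null (diff_iUnion_smul_orbitStrictMaxSet_inter_subset hKinv) ?_
    refine measure_iUnion_null fun g => measure_iUnion_null fun h =>
      measure_iUnion_null fun hgh => ?_
    simpa only [map_sub, sub_eq_zero] using hℓ (n, ⟨(g, h), hgh⟩)

/-- Let a finite group `G` act by affine automorphisms `ρ` on a
finite-dimensional real normed vector space `E`, mapping faces of a finite simplicial
complex `K` to faces, freely on the underlying space `|K|`, and such that no nontrivial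
group element maps a point of the relative interior of (the convex hull of) a face back
into that relative interior.  Then for any sequence `μₙ` of finite Borel measures on `E`
there is a relatively open subset `U ⊆ |K|` whose `G`-translates are pairwise disjoint
and cover `|K|` up to a set which is `μₙ`-null for every `n`. -/
theorem stmt0 {G : Type*} [Group G] [Finite G]
    {E : Type*} [NormedAddCommGroup E] [NormedSpace ℝ E] [FiniteDimensional ℝ E]
    [MeasurableSpace E] [BorelSpace E] [DecidableEq E]
    (K : Geometry.SimplicialComplex ℝ E) (hKfin : K.faces.Finite)
    (ρ : G →* (E ≃ᵃ[ℝ] E))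
    (hfaces : ∀ g : G, ∀ s ∈ K.faces, s.image (ρ g) ∈ K.faces)
    (hfree : ∀ g : G, g ≠ 1 → ∀ x ∈ K.space, ρ g x ≠ x)
    (hint : ∀ g : G, g ≠ 1 → ∀ s ∈ K.faces,
      (ρ g) '' (intrinsicInterior ℝ (convexHull ℝ (s : Set E))) ∩
        intrinsicInterior ℝ (convexHull ℝ (s : Set E)) = ∅)
    (μ : ℕ → Measure E) (hμ : ∀ n, IsFiniteMeasure (μ n)) :
    ∃ U : Set E, U ⊆ K.space ∧ (∃ V : Set E, IsOpen V ∧ U = V ∩ K.space) ∧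
      (∀ g h : G, g ≠ h → (ρ g) '' U ∩ (ρ h) '' U = ∅) ∧
      ∀ n : ℕ, μ n (K.space \ ⋃ g : G, (ρ g) '' U) = 0 :=
  stmt0_general K hKfin ρ hfaces hfree μ hμ
end

section
/- Let d ≥ 1 and let Θ = (θⱼₖ) be a skew-symmetric d × d real matrix. Define h_Θ : ℤ^d → 𝕋^d = (ℝ/ℤ)^d by h_Θ(m) = (Σⱼ θ₁ⱼ mⱼ mod 1, …, Σⱼ θ_dⱼ mⱼ mod 1) for m = (m₁,…,m_d) ∈ ℤ^d. Then Θ is nondegenerate if and only if h_Θ has dense range in 𝕋^d. -/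
/-!
Weyl's averaging argument. Average a continuous function `F` on the torus over the translates
`p + ∑ mᵢ • aᵢ`, `0 ≤ mᵢ < N`. For a character `χ` the average is `χ p` times a product of
geometric means `N⁻¹ ∑_{t<N} χ(aᵢ)ᵗ`, which tends to `0` unless `χ(aᵢ) = 1` for all `i`. Hence,
when no nontrivial character is trivial on the `aᵢ`, the averages at `x` and at `0` have the same
limit for every character, and, by density of trigonometric polynomials and the uniform bound
on the averaging functionals, for every continuous `F`. A Urysohn function equal to `1` on the
closed subgroup `S` generated by the `aᵢ` and to `0` on `x + S` then forces `x ∈ S`. Conversely, a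
character trivial on a dense subgroup is trivial. For `h_Θ` the generators are the columns of `Θ`,
and the character `n` is trivial on them exactly when `∑ⱼ nⱼ θⱼₖ ∈ ℤ` for all `k`.
-/

open Finset Filter Topology

lemma AddChar.map_sum_eq_prod {ι A M : Type*} [AddCommMonoid A] [CommMonoid M]
    (ψ : AddChar A M) (s : Finset ι) (f : ι → A) : ψ (∑ i ∈ s, f i) = ∏ i ∈ s, ψ (f i) := by
  classical
  induction s using Finset.induction_on with
  | empty => simp
  | insert i s hi ih => rw [sum_insert hi, prod_insert hi, map_add_eq_mul, ih]

lemma tendsto_inv_mul_geom_sum {𝕜 : Type*} [RCLike 𝕜] {z : 𝕜} (hz : ‖z‖ ≤ 1) :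
    Tendsto (fun N : ℕ => (N : 𝕜)⁻¹ * ∑ t ∈ range N, z ^ t) atTop
      (𝓝 (if z = 1 then 1 else 0)) := by
  split_ifs with h1
  · subst h1
    refine tendsto_const_nhds.congr' ?_
    filter_upwards [eventually_ne_atTop 0] with N hN
    simp [inv_mul_cancel₀ (Nat.cast_ne_zero.mpr hN : (N : 𝕜) ≠ 0)]
  · have hz1 : 0 < ‖z - 1‖ := norm_pos_iff.mpr (sub_ne_zero.mpr h1)
    refine squeeze_zero_norm (a := fun N : ℕ => 2 / ‖z - 1‖ * (N : ℝ)⁻¹) (fun N => ?_) ?_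
    · have hzN : ‖z ^ N - 1‖ ≤ 2 := by
        calc ‖z ^ N - 1‖ ≤ ‖z‖ ^ N + ‖(1 : 𝕜)‖ := by rw [← norm_pow]; exact norm_sub_le _ _
          _ ≤ 2 := by rw [norm_one]; linarith [pow_le_one₀ (n := N) (norm_nonneg z) hz]
      rw [geom_sum_eq h1, norm_mul, norm_div, norm_inv, RCLike.norm_natCast, mul_comm]
      gcongr
    · simpa using (tendsto_inv_atTop_zero.comp tendsto_natCast_atTop_atTop).const_mul (2 / ‖z - 1‖)

theorem ContinuousLinearMap.tendsto_apply_zero_of_dense_span {𝕜 E F ι : Type*}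
    [NontriviallyNormedField 𝕜] [SeminormedAddCommGroup E] [NormedSpace 𝕜 E]
    [SeminormedAddCommGroup F] [NormedSpace 𝕜 F] {l : Filter ι} {L : ι → E →L[𝕜] F} {C : NNReal}
    (hL : ∀ i, ‖L i‖₊ ≤ C) {s : Set E} (hs : (Submodule.span 𝕜 s).topologicalClosure = ⊤)
    (h : ∀ x ∈ s, Tendsto (L · x) l (𝓝 0)) (x : E) : Tendsto (L · x) l (𝓝 0) := by
  let M : Submodule 𝕜 E :=
    { carrier := {x | Tendsto (L · x) l (𝓝 0)}
      add_mem' := fun hx hy => by simpa using hx.add hy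
      zero_mem' := by simpa using tendsto_const_nhds
      smul_mem' := fun c _ hx => by simpa using hx.const_smul c }
  have hM : IsClosed (M : Set E) :=
    (LipschitzWith.uniformEquicontinuous (fun i => ⇑(L i)) C fun i =>
      (L i).lipschitz.weaken (hL i)).equicontinuous.isClosed_setOfPred_tendsto continuous_const
  have hle : ⊤ ≤ M :=
    hs ▸ (Submodule.span 𝕜 s).topologicalClosure_minimal (Submodule.span_le.mpr h) hM
  exact hle Submodule.mem_top

namespace UnitAddTorus

section Characters

variable {d : Type*} [Fintype d]

lemma mFourier_apply_add (n : d → ℤ) (x y : UnitAddTorus d) :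
    mFourier n (x + y) = mFourier n x * mFourier n y := by
  simp only [mFourier, ContinuousMap.coe_mk, Pi.add_apply, fourier_apply, smul_add,
    AddCircle.toCircle_add, Circle.coe_mul, prod_mul_distrib]

noncomputable def mFourierChar (n : d → ℤ) : AddChar (UnitAddTorus d) ℂ where
  toFun := mFourier n
  map_zero_eq_one' := by simp [mFourier]
  map_add_eq_mul' := mFourier_apply_add n

lemma norm_mFourier_apply_le (n : d → ℤ) (x : UnitAddTorus d) : ‖mFourier n x‖ ≤ 1 :=
  ((mFourier n).norm_coe_le_norm x).trans mFourier_norm.le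

lemma mFourier_piSingle_apply [DecidableEq d] (n : d → ℤ) (j : d) (t : UnitAddCircle) :
    mFourier n (Pi.single j t) = fourier (n j) t := by
  rw [mFourier, ContinuousMap.coe_mk, prod_eq_single j (fun i _ hij => by simp [hij])
    (by simp), Pi.single_eq_same]

lemma mFourier_eq_one_iff {n : d → ℤ} : mFourier n = 1 ↔ n = 0 := by
  classical
  refine ⟨fun h => ?_, fun h => h ▸ mFourier_zero⟩
  by_contra hn
  obtain ⟨j, hj⟩ := Function.ne_iff.mp hn
  have := congr($h (Pi.single j ((1 / 2 / n j : ℝ) : UnitAddCircle)))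
  rw [mFourier_piSingle_apply, ← zero_add (((1 / 2 / n j : ℝ) : UnitAddCircle)),
    fourier_add_half_inv_index hj one_pos, fourier_eval_zero] at this
  norm_num at this

lemma mFourier_coe_eq_one_iff (n : d → ℤ) (v : d → ℝ) :
    mFourier n (fun j => (v j : UnitAddCircle)) = 1 ↔ ∃ z : ℤ, ∑ j, n j * v j = z := by
  have : mFourier n (fun j => (v j : UnitAddCircle)) =
      Complex.exp ((∑ j, n j * v j : ℝ) * (2 * Real.pi * Complex.I)) := by
    simp only [mFourier, ContinuousMap.coe_mk, fourier_coe_apply, ← Complex.exp_sum]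
    push_cast
    rw [sum_mul]
    exact congrArg _ (sum_congr rfl fun j _ => by ring)
  rw [this, Complex.exp_eq_one_iff]
  simp only [mul_left_inj' Complex.two_pi_I_ne_zero]
  norm_cast

end Characters

section BoxAverage

variable {ι d : Type*} [Fintype ι] [DecidableEq ι] (a : ι → UnitAddTorus d)

noncomputable def boxAverage (N : ℕ) (p : UnitAddTorus d) : C(UnitAddTorus d, ℂ) →L[ℂ] ℂ :=
  ((N : ℂ) ^ Fintype.card ι)⁻¹ •
    ∑ m ∈ Fintype.piFinset fun _ : ι => range N, ContinuousMap.evalCLM ℂ (p + ∑ i, m i • a i)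

lemma boxAverage_apply (N : ℕ) (p : UnitAddTorus d) (F : C(UnitAddTorus d, ℂ)) :
    boxAverage a N p F = ((N : ℂ) ^ Fintype.card ι)⁻¹ *
      ∑ m ∈ Fintype.piFinset fun _ : ι => range N, F (p + ∑ i, m i • a i) := by
  simp [boxAverage]

lemma card_piFinset_range (N : ℕ) :
    #(Fintype.piFinset fun _ : ι => range N) = N ^ Fintype.card ι := by
  simp

lemma norm_boxAverage_le (N : ℕ) (p : UnitAddTorus d) : ‖boxAverage a N p‖ ≤ 1 := by
  refine ContinuousLinearMap.opNorm_le_bound _ zero_le_one fun F => ?_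
  rw [boxAverage_apply, norm_mul, one_mul, norm_inv, norm_pow, Complex.norm_natCast]
  calc ((N : ℝ) ^ Fintype.card ι)⁻¹ *
        ‖∑ m ∈ Fintype.piFinset fun _ : ι => range N, F (p + ∑ i, m i • a i)‖
      ≤ ((N : ℝ) ^ Fintype.card ι)⁻¹ * ∑ _m ∈ Fintype.piFinset fun _ : ι => range N, ‖F‖ := by
        gcongr
        exact (norm_sum_le _ _).trans (sum_le_sum fun m _ => F.norm_coe_le_norm _)
    _ ≤ ‖F‖ := by
        rw [sum_const, card_piFinset_range, nsmul_eq_mul, ← mul_assoc]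
        push_cast
        exact mul_le_of_le_one_left (norm_nonneg F) (inv_mul_le_one_of_le₀ le_rfl (by positivity))

lemma boxAverage_apply_of_forall_eq {N : ℕ} (hN : N ≠ 0) {p : UnitAddTorus d}
    {F : C(UnitAddTorus d, ℂ)} {c : ℂ} (hF : ∀ m : ι → ℕ, F (p + ∑ i, m i • a i) = c) :
    boxAverage a N p F = c := by
  rw [boxAverage_apply]
  simp only [hF, sum_const, card_piFinset_range, nsmul_eq_mul]
  push_cast
  rw [← mul_assoc, inv_mul_cancel₀ (by simp [hN]), one_mul]

lemma boxAverage_mFourier [Fintype d] (N : ℕ) (p : UnitAddTorus d) (n : d → ℤ) :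
    boxAverage a N p (mFourier n) =
      mFourier n p * ∏ i, ((N : ℂ)⁻¹ * ∑ t ∈ range N, mFourier n (a i) ^ t) := by
  rw [prod_mul_distrib, prod_univ_sum, prod_const, card_univ, inv_pow, boxAverage_apply, mul_sum,
    mul_sum, mul_sum]
  refine sum_congr rfl fun m _ => ?_
  have : mFourier n (∑ i, m i • a i) = ∏ i, mFourier n (a i) ^ m i := by
    simpa [mFourierChar, AddChar.map_nsmul_eq_pow] using
      (mFourierChar n).map_sum_eq_prod univ fun i => m i • a i
  rw [mFourier_apply_add, this]
  ring

lemma tendsto_boxAverage_mFourier [Fintype d] (p : UnitAddTorus d) (n : d → ℤ) :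
    Tendsto (fun N => boxAverage a N p (mFourier n)) atTop
      (𝓝 (mFourier n p * ∏ i, if mFourier n (a i) = 1 then 1 else 0)) := by
  simp_rw [boxAverage_mFourier]
  exact (tendsto_finsetProd _ fun i _ =>
    tendsto_inv_mul_geom_sum (norm_mFourier_apply_le n (a i))).const_mul _

lemma tendsto_boxAverage_sub [Fintype d]
    (ha : ∀ n : d → ℤ, (∀ i, mFourier n (a i) = 1) → n = 0) (x : UnitAddTorus d)
    (F : C(UnitAddTorus d, ℂ)) :
    Tendsto (fun N => boxAverage a N x F - boxAverage a N 0 F) atTop (𝓝 0) := by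
  refine ContinuousLinearMap.tendsto_apply_zero_of_dense_span (C := 2)
    (L := fun N => boxAverage a N x - boxAverage a N 0) (fun N => ?_)
    span_mFourier_closure_eq_top ?_ F
  · rw [← NNReal.coe_le_coe, coe_nnnorm]
    calc ‖boxAverage a N x - boxAverage a N 0‖
        ≤ ‖boxAverage a N x‖ + ‖boxAverage a N 0‖ :=
          norm_sub_le (boxAverage a N x) (boxAverage a N 0)
      _ ≤ 2 := by linarith [norm_boxAverage_le a N x, norm_boxAverage_le a N 0]
  rintro _ ⟨n, rfl⟩
  have hlim : mFourier n x * (∏ i, if mFourier n (a i) = 1 then 1 else 0) -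
      mFourier n 0 * (∏ i, if mFourier n (a i) = 1 then 1 else 0) = 0 := by
    by_cases hn : ∀ i, mFourier n (a i) = 1
    · simp [ha n hn, mFourier_zero]
    · obtain ⟨i, hi⟩ := not_forall.mp hn
      rw [prod_eq_zero (mem_univ i) (by rw [if_neg hi]), mul_zero, mul_zero, sub_zero]
  simpa [hlim] using (tendsto_boxAverage_mFourier a x n).sub (tendsto_boxAverage_mFourier a 0 n)

end BoxAverage

section Density

variable {ι d : Type*} [Fintype ι] [Fintype d] (a : ι → UnitAddTorus d)

theorem eq_zero_of_denseRange_sum_zsmul (hdense : DenseRange fun m : ι → ℤ => ∑ i, m i • a i)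
    {n : d → ℤ} (hn : ∀ i, mFourier n (a i) = 1) : n = 0 := by
  refine mFourier_eq_one_iff.mp (ContinuousMap.ext fun x => hdense.induction_on x
    (isClosed_eq (mFourier n).continuous continuous_const) fun m => ?_)
  simpa [mFourierChar, AddChar.map_zsmul_eq_zpow, hn] using
    (mFourierChar n).map_sum_eq_prod univ fun i => m i • a i

theorem denseRange_sum_zsmul (ha : ∀ n : d → ℤ, (∀ i, mFourier n (a i) = 1) → n = 0) :
    DenseRange fun m : ι → ℤ => ∑ i, m i • a i := by
  classical
  intro x
  let S := (LinearMap.range (Fintype.linearCombination ℤ a)).toAddSubgroup.topologicalClosure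
  have hS : closure (Set.range fun m : ι → ℤ => ∑ i, m i • a i) = S := by
    rw [AddSubgroup.topologicalClosure_coe, Submodule.coe_toAddSubgroup, LinearMap.coe_range]
    simp_rw [← Fintype.linearCombination_apply ℤ]
  have hSc : IsClosed (S : Set (UnitAddTorus d)) := AddSubgroup.isClosed_topologicalClosure _
  have hmem (m : ι → ℕ) : ∑ i, m i • a i ∈ S := by
    rw [← SetLike.mem_coe, ← hS]
    exact subset_closure ⟨fun i => (m i : ℤ), by simp⟩
  rw [hS]
  by_contra hx
  obtain ⟨f, hf0, hf1, -⟩ := exists_continuous_zero_one_of_isClosed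
    (hSc.preimage (continuous_sub_right x)) hSc
    (Set.disjoint_left.mpr fun y hyx hy => hx (by simpa using S.sub_mem hy hyx))
  let F : C(UnitAddTorus d, ℂ) := ⟨fun y => (f y : ℂ), by fun_prop⟩
  have hF (N : ℕ) (hN : N ≠ 0) : boxAverage a N x F - boxAverage a N 0 F = -1 := by
    rw [boxAverage_apply_of_forall_eq a hN (c := 0) fun m => by
        simpa [F] using hf0 (by simpa using hmem m),
      boxAverage_apply_of_forall_eq a hN (c := 1) fun m => by
        simpa [F] using hf1 (by simpa using hmem m)]
    ring
  have := tendsto_nhds_unique (tendsto_boxAverage_sub a ha x F)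
    (tendsto_const_nhds.congr' ((eventually_ne_atTop 0).mono fun N hN => (hF N hN).symm))
  norm_num at this

theorem denseRange_sum_zsmul_iff :
    (DenseRange fun m : ι → ℤ => ∑ i, m i • a i) ↔
      ∀ n : d → ℤ, (∀ i, mFourier n (a i) = 1) → n = 0 :=
  ⟨fun h _ => eq_zero_of_denseRange_sum_zsmul a h, denseRange_sum_zsmul a⟩

end Density

end UnitAddTorus

theorem stmt2_general (d : ℕ) (Θ : Matrix (Fin d) (Fin d) ℝ) :
    (∀ n : Fin d → ℤ, (∀ j : Fin d, ∃ z : ℤ, (∑ k, (n k : ℝ) * Θ k j) = (z : ℝ)) → n = 0) ↔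
      DenseRange (fun m : Fin d → ℤ => fun j : Fin d =>
        ((∑ k, Θ j k * (m k : ℝ) : ℝ) : AddCircle (1 : ℝ))) := by
  have hmap : (fun m : Fin d → ℤ => fun j : Fin d =>
      ((∑ k, Θ j k * (m k : ℝ) : ℝ) : AddCircle (1 : ℝ))) =
      fun m => ∑ k, m k • fun j => (Θ j k : UnitAddCircle) := by
    funext m j
    simp [Finset.sum_apply, ← QuotientAddGroup.mk_zsmul, mul_comm]
  simp_rw [hmap, UnitAddTorus.denseRange_sum_zsmul_iff, UnitAddTorus.mFourier_coe_eq_one_iff]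

/-- For a skew-symmetric real `d × d` matrix `Θ` (`d ≥ 1`), the map
`h_Θ : ℤ^d → (ℝ/ℤ)^d`, `h_Θ(m)_j = Σ_k Θ_{jk} m_k mod 1`, has dense range if and only if
`Θ` is nondegenerate, i.e. the only `n ∈ ℤ^d` with `Σ_k n_k Θ_{kj} ∈ ℤ` for all `j` is `n = 0`. -/
theorem stmt2 (d : ℕ) (hd : 1 ≤ d) (Θ : Matrix (Fin d) (Fin d) ℝ)
    (hskew : Θ.transpose = -Θ) :
    (∀ n : Fin d → ℤ, (∀ j : Fin d, ∃ z : ℤ, (∑ k, (n k : ℝ) * Θ k j) = (z : ℝ)) → n = 0) ↔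
      DenseRange (fun m : Fin d → ℤ => fun j : Fin d =>
        ((∑ k, Θ j k * (m k : ℝ) : ℝ) : AddCircle (1 : ℝ))) :=
  stmt2_general d Θ
end

section
/- Let d ∈ ℕ. Let Ω ⊆ (ℝ × ℝ)^{d+1} be the set of tuples ((s₀,t₀),…,(s_d,t_d)) such that 0 ≤ sⱼ ≤ 1 and 0 ≤ tⱼ ≤ 1 for all j, sⱼ·tⱼ = 0 for every j = 0,…,d, and Σⱼ (sⱼ + tⱼ) = 1, equipped with the subspace topology and the involution σ : Ω → Ω swapping sⱼ and tⱼ in every coordinate. Then there exists a homeomorphism φ from Ω onto the unit sphere S^d = { x ∈ ℝ^{d+1} : ‖x‖ = 1 } such that φ(σ(ω)) = −φ(ω) for every ω ∈ Ω. -/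
/-- The space `Ω ⊆ (ℝ × ℝ)^{d+1}` of tuples `((s₀,t₀),…,(s_d,t_d))` with
`0 ≤ sⱼ, tⱼ ≤ 1`, `sⱼ tⱼ = 0` for each `j`, and `Σⱼ (sⱼ + tⱼ) = 1`. -/
def stmt8Omega (d : ℕ) : Set (Fin (d + 1) → ℝ × ℝ) :=
  {ω | (∀ j, 0 ≤ (ω j).1 ∧ (ω j).1 ≤ 1 ∧ 0 ≤ (ω j).2 ∧ (ω j).2 ≤ 1 ∧ (ω j).1 * (ω j).2 = 0) ∧
    ∑ j, ((ω j).1 + (ω j).2) = 1}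

/-- The involution of `(ℝ × ℝ)^{d+1}` swapping `sⱼ` and `tⱼ` in every coordinate. -/
def stmt8Swap (d : ℕ) : (Fin (d + 1) → ℝ × ℝ) → (Fin (d + 1) → ℝ × ℝ) :=
  fun ω j => ((ω j).2, (ω j).1)

/-!
The coordinates `x_j = s_j - t_j` identify `Ω` with the unit sphere of the `ℓ¹` norm on
`ℝ^{d+1}`: for `s_j, t_j ≥ 0` the condition `s_j t_j = 0` says exactly that
`(s_j, t_j) = (x_j⁺, x_j⁻)`, and then `Σ (s_j + t_j) = Σ |x_j|`. Radial projection
`x ↦ x / ‖x‖` maps the `ℓ¹` sphere homeomorphically onto the Euclidean one. Swapping `s_j` and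
`t_j` negates `x`, and radial projection is odd.
-/

open Finset Metric

section RadialProjection

variable {E : Type*} [NormedAddCommGroup E] [NormedSpace ℝ E]

lemma ne_zero_of_eq_one_of_homogeneous {N : E → ℝ}
    (hhom : ∀ (c : ℝ) (x : E), 0 ≤ c → N (c • x) = c * N x) {x : E} (hx : N x = 1) :
    x ≠ 0 := by
  rintro rfl
  simpa [hx] using hhom 0 0 le_rfl

noncomputable def radialHomeomorphSphere (N : E → ℝ) (hN : Continuous N)
    (hhom : ∀ (c : ℝ) (x : E), 0 ≤ c → N (c • x) = c * N x)
    (hpos : ∀ x : E, x ≠ 0 → 0 < N x) :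
    {x : E | N x = 1} ≃ₜ sphere (0 : E) 1 where
  toFun x := ⟨‖(x : E)‖⁻¹ • (x : E), by
    simp [norm_smul, ne_zero_of_eq_one_of_homogeneous hhom x.2]⟩
  invFun y := ⟨(N y)⁻¹ • (y : E), by
    have hy := hpos y (ne_zero_of_mem_unit_sphere y)
    show N _ = 1
    rw [hhom _ _ (inv_nonneg.2 hy.le), inv_mul_cancel₀ hy.ne']⟩
  left_inv x := by
    have h1 : N x = 1 := x.2
    have hx := norm_pos_iff.2 (ne_zero_of_eq_one_of_homogeneous hhom h1)
    ext1
    simp only [hhom _ _ (inv_nonneg.2 hx.le), h1, mul_one, inv_inv, smul_smul,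
      mul_inv_cancel₀ hx.ne', one_smul]
  right_inv y := by
    have hy := hpos y (ne_zero_of_mem_unit_sphere y)
    ext1
    simp only [norm_smul, norm_inv, Real.norm_of_nonneg hy.le, norm_eq_of_mem_sphere y, mul_one,
      inv_inv, smul_smul, mul_inv_cancel₀ hy.ne', one_smul]
  continuous_toFun := by
    refine Continuous.subtype_mk (Continuous.smul ?_ continuous_subtype_val) _
    exact continuous_subtype_val.norm.inv₀ fun x =>
      norm_ne_zero_iff.2 (ne_zero_of_eq_one_of_homogeneous hhom x.2)
  continuous_invFun := by
    refine Continuous.subtype_mk (Continuous.smul ?_ continuous_subtype_val) _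
    exact (hN.comp continuous_subtype_val).inv₀ fun y =>
      (hpos y (ne_zero_of_mem_unit_sphere y)).ne'

lemma radialHomeomorphSphere_apply_coe {N : E → ℝ} (hN : Continuous N)
    (hhom : ∀ (c : ℝ) (x : E), 0 ≤ c → N (c • x) = c * N x) (hpos : ∀ x : E, x ≠ 0 → 0 < N x)
    (x : {x : E | N x = 1}) :
    (radialHomeomorphSphere N hN hhom hpos x : E) = ‖(x : E)‖⁻¹ • (x : E) :=
  rfl

end RadialProjection

section L1Sphere

variable {ι : Type*} [Fintype ι]

lemma continuous_sum_abs : Continuous fun x : EuclideanSpace ℝ ι => ∑ i, |x i| := by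
  fun_prop

lemma sum_abs_smul_of_nonneg (c : ℝ) (x : EuclideanSpace ℝ ι) (hc : 0 ≤ c) :
    ∑ i, |(c • x) i| = c * ∑ i, |x i| := by
  simp only [PiLp.smul_apply, smul_eq_mul, abs_mul, abs_of_nonneg hc, mul_sum]

lemma sum_abs_pos_of_ne_zero (x : EuclideanSpace ℝ ι) (hx : x ≠ 0) : 0 < ∑ i, |x i| := by
  obtain ⟨i, hi⟩ : ∃ i, x i ≠ 0 := by
    by_contra! h
    exact hx (PiLp.ext h)
  exact sum_pos' (fun j _ => abs_nonneg (x j)) ⟨i, mem_univ i, abs_pos.2 hi⟩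

end L1Sphere

section PosNegParts

variable {R : Type*} [Ring R] [LinearOrder R] [IsStrictOrderedRing R]

lemma posPart_sub_of_mul_eq_zero {s t : R} (hs : 0 ≤ s) (ht : 0 ≤ t) (hst : s * t = 0) :
    (s - t)⁺ = s := by
  rcases mul_eq_zero.1 hst with rfl | rfl
  · simpa using ht
  · simpa using hs

lemma negPart_sub_of_mul_eq_zero {s t : R} (hs : 0 ≤ s) (ht : 0 ≤ t) (hst : s * t = 0) :
    (s - t)⁻ = t := by
  rcases mul_eq_zero.1 hst with rfl | rfl
  · simpa using ht
  · simpa using hs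

lemma posPart_mul_negPart_eq_zero (a : R) : a⁺ * a⁻ = 0 := by
  rcases le_total 0 a with h | h
  · simp [negPart_eq_zero.2 h]
  · simp [posPart_eq_zero.2 h]

end PosNegParts

section Omega

variable {ι : Type*}

def diffVec (ω : ι → ℝ × ℝ) : EuclideanSpace ℝ ι :=
  WithLp.toLp 2 fun j => (ω j).1 - (ω j).2

def posNegParts (x : EuclideanSpace ℝ ι) : ι → ℝ × ℝ :=
  fun j => ((x j)⁺, (x j)⁻)

lemma diffVec_posNegParts (x : EuclideanSpace ℝ ι) : diffVec (posNegParts x) = x := by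
  ext j
  exact posPart_sub_negPart (x j)

lemma continuous_diffVec : Continuous (diffVec : (ι → ℝ × ℝ) → EuclideanSpace ℝ ι) := by
  unfold diffVec
  fun_prop

lemma continuous_posNegParts :
    Continuous (posNegParts : EuclideanSpace ℝ ι → ι → ℝ × ℝ) := by
  unfold posNegParts
  fun_prop

variable {d : ℕ}

lemma stmt8Swap_mem {ω : Fin (d + 1) → ℝ × ℝ} (hω : ω ∈ stmt8Omega d) :
    stmt8Swap d ω ∈ stmt8Omega d := by
  refine ⟨fun j => ?_, ?_⟩
  · obtain ⟨hs, hs1, ht, ht1, hst⟩ := hω.1 j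
    exact ⟨ht, ht1, hs, hs1, by rw [mul_comm]; exact hst⟩
  · simpa only [stmt8Swap, add_comm] using hω.2

lemma diffVec_stmt8Swap (ω : Fin (d + 1) → ℝ × ℝ) : diffVec (stmt8Swap d ω) = -diffVec ω := by
  ext j
  exact (neg_sub _ _).symm

lemma posNegParts_diffVec {ω : Fin (d + 1) → ℝ × ℝ} (hω : ω ∈ stmt8Omega d) :
    posNegParts (diffVec ω) = ω := by
  funext j
  obtain ⟨hs, -, ht, -, hst⟩ := hω.1 j
  exact Prod.ext (posPart_sub_of_mul_eq_zero hs ht hst) (negPart_sub_of_mul_eq_zero hs ht hst)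

lemma sum_abs_diffVec {ω : Fin (d + 1) → ℝ × ℝ} (hω : ω ∈ stmt8Omega d) :
    ∑ j, |diffVec ω j| = 1 := by
  rw [← hω.2]
  refine sum_congr rfl fun j _ => ?_
  obtain ⟨hs, -, ht, -, hst⟩ := hω.1 j
  rw [← posPart_add_negPart]
  exact congrArg₂ (· + ·) (posPart_sub_of_mul_eq_zero hs ht hst)
    (negPart_sub_of_mul_eq_zero hs ht hst)

lemma posNegParts_mem {x : EuclideanSpace ℝ (Fin (d + 1))} (hx : ∑ j, |x j| = 1) :
    posNegParts x ∈ stmt8Omega d := by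
  have habs : ∀ j, (x j)⁺ + (x j)⁻ ≤ 1 := fun j => by
    rw [posPart_add_negPart, ← hx]
    exact single_le_sum (fun i _ => abs_nonneg (x i)) (mem_univ j)
  refine ⟨fun j => ⟨posPart_nonneg _, ?_, negPart_nonneg _, ?_, posPart_mul_negPart_eq_zero _⟩, ?_⟩
  · exact (le_add_of_nonneg_right (negPart_nonneg _)).trans (habs j)
  · exact (le_add_of_nonneg_left (posPart_nonneg _)).trans (habs j)
  · simpa only [posNegParts, posPart_add_negPart] using hx

end Omega

noncomputable def stmt8OmegaHomeomorphL1Sphere (d : ℕ) :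
    stmt8Omega d ≃ₜ {x : EuclideanSpace ℝ (Fin (d + 1)) | ∑ j, |x j| = 1} where
  toFun ω := ⟨diffVec ω, sum_abs_diffVec ω.2⟩
  invFun x := ⟨posNegParts x, posNegParts_mem x.2⟩
  left_inv ω := Subtype.ext (posNegParts_diffVec ω.2)
  right_inv x := Subtype.ext (diffVec_posNegParts (x : EuclideanSpace ℝ (Fin (d + 1))))
  continuous_toFun := (continuous_diffVec.comp continuous_subtype_val).subtype_mk _
  continuous_invFun := (continuous_posNegParts.comp continuous_subtype_val).subtype_mk _

lemma stmt8OmegaHomeomorphL1Sphere_apply_coe {d : ℕ} (ω : stmt8Omega d) :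
    (stmt8OmegaHomeomorphL1Sphere d ω : EuclideanSpace ℝ (Fin (d + 1))) = diffVec ω :=
  rfl

/-- The involution `σ` preserves `Ω`, and `Ω` (with the subspace topology and
the involution `σ`) is equivariantly homeomorphic to the unit sphere `S^d ⊆ ℝ^{d+1}` with
the antipodal involution: there is a homeomorphism `φ : Ω ≃ S^d` with `φ(σ(ω)) = -φ(ω)`. -/
theorem stmt8 (d : ℕ) :
    (∀ ω ∈ stmt8Omega d, stmt8Swap d ω ∈ stmt8Omega d) ∧
    ∃ φ : (stmt8Omega d) ≃ₜ (Metric.sphere (0 : EuclideanSpace ℝ (Fin (d + 1))) 1),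
      ∀ (ω : Fin (d + 1) → ℝ × ℝ) (hω : ω ∈ stmt8Omega d)
        (hσω : stmt8Swap d ω ∈ stmt8Omega d),
        (φ ⟨stmt8Swap d ω, hσω⟩ : EuclideanSpace ℝ (Fin (d + 1))) =
          -(φ ⟨ω, hω⟩ : EuclideanSpace ℝ (Fin (d + 1))) := by
  refine ⟨fun ω hω => stmt8Swap_mem hω,
    (stmt8OmegaHomeomorphL1Sphere d).trans (radialHomeomorphSphere _ continuous_sum_abs
      sum_abs_smul_of_nonneg sum_abs_pos_of_ne_zero), fun ω hω hσω => ?_⟩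
  simp only [Homeomorph.trans_apply, radialHomeomorphSphere_apply_coe,
    stmt8OmegaHomeomorphL1Sphere_apply_coe, diffVec_stmt8Swap, norm_neg, smul_neg]
end

section
/- Let G be a compact topological group, let A be a C*-algebra, and let α : G → Aut(A) be an action of G on A by *-automorphisms such that (g,a) ↦ α_g(a) is continuous. Then for every ε > 0 and every finite subset F ⊆ A there exists a positive contraction e ∈ A (0 ≤ e and ‖e‖ ≤ 1) such that sup_{g∈G} ‖α_g(e) − e‖ < ε, and for every a ∈ F one has ‖ea − ae‖ < ε, ‖ea − a‖ < ε, and ‖ae − a‖ < ε. -/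
/-!
Choose `e₀` from the canonical approximate unit so that it is an `ε / 3`-unit uniformly on the
compact orbit set `{α g a | g ∈ G, a ∈ F}`, and average it over the normalized Haar measure:
`e = ∫ α g e₀ dg`. Positivity and the norm bound survive averaging, left invariance of the Haar
measure makes `e` invariant, and since each `α g` is isometric,
`‖α g e₀ * a - a‖ = ‖e₀ * α g⁻¹ a - α g⁻¹ a‖ ≤ ε / 3`, a bound that passes to the average.
-/

open MeasureTheory Filter

section NormedRing

variable {A : Type*} [NonUnitalNormedRing A] {e : A}

lemma norm_mul_sub_le_of_norm_le_one (he : ‖e‖ ≤ 1) (y k : A) :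
    ‖e * k - k‖ ≤ ‖e * y - y‖ + 2 * ‖k - y‖ := by
  have hek : ‖e * (k - y)‖ ≤ ‖k - y‖ :=
    (norm_mul_le _ _).trans (mul_le_of_le_one_left (norm_nonneg _) he)
  calc ‖e * k - k‖ = ‖e * (k - y) + (e * y - y) - (k - y)‖ := by noncomm_ring
    _ ≤ ‖e * (k - y)‖ + ‖e * y - y‖ + ‖k - y‖ := norm_sub_le_of_le (norm_add_le _ _) le_rfl
    _ ≤ ‖e * y - y‖ + 2 * ‖k - y‖ := by linarith

lemma norm_mul_sub_le_of_norm_le_one' (he : ‖e‖ ≤ 1) (y k : A) :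
    ‖k * e - k‖ ≤ ‖y * e - y‖ + 2 * ‖k - y‖ := by
  have hke : ‖(k - y) * e‖ ≤ ‖k - y‖ :=
    (norm_mul_le _ _).trans (mul_le_of_le_one_right (norm_nonneg _) he)
  calc ‖k * e - k‖ = ‖(k - y) * e + (y * e - y) - (k - y)‖ := by noncomm_ring
    _ ≤ ‖(k - y) * e‖ + ‖y * e - y‖ + ‖k - y‖ := norm_sub_le_of_le (norm_add_le _ _) le_rfl
    _ ≤ ‖y * e - y‖ + 2 * ‖k - y‖ := by linarith

end NormedRing

namespace CStarAlgebra

variable {A : Type*} [NonUnitalCStarAlgebra A] [PartialOrder A] [StarOrderedRing A]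

/-- Multiplication by a contraction is 1-Lipschitz, so pointwise convergence of the approximate
unit on a finite `δ / 3`-net of `K` gives uniform convergence on `K`. -/
lemma exists_approximateUnit_of_isCompact {K : Set A} (hK : IsCompact K) {δ : ℝ} (hδ : 0 < δ) :
    ∃ e : A, 0 ≤ e ∧ ‖e‖ ≤ 1 ∧ ∀ k ∈ K, ‖e * k - k‖ < δ ∧ ‖k * e - k‖ < δ := by
  obtain ⟨t, ht, hKt⟩ := Metric.totallyBounded_iff.mp hK.totallyBounded (δ / 3) (by positivity)
  have hl := increasingApproximateUnit A
  have := hl.neBot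
  have hnet : ∀ᶠ x in approximateUnit A, ∀ y ∈ t, ‖x * y - y‖ < δ / 3 ∧ ‖y * x - y‖ < δ / 3 := by
    refine (eventually_all_finite ht).mpr fun y _ => ?_
    have hball := Metric.ball_mem_nhds y (by positivity : 0 < δ / 3)
    filter_upwards [(hl.tendsto_mul_right y).eventually hball,
      (hl.tendsto_mul_left y).eventually hball] with x hxy hyx
    rw [← dist_eq_norm, ← dist_eq_norm]
    exact ⟨hxy, hyx⟩
  obtain ⟨e, ⟨he0, he1⟩, he⟩ := ((hl.eventually_nonneg.and hl.eventually_norm).and hnet).exists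
  refine ⟨e, he0, he1, fun k hk => ?_⟩
  obtain ⟨y, hy, hky⟩ := Set.mem_iUnion₂.mp (hKt hk)
  rw [Metric.mem_ball, dist_eq_norm] at hky
  have := he y hy
  constructor
  · linarith [norm_mul_sub_le_of_norm_le_one he1 y k]
  · linarith [norm_mul_sub_le_of_norm_le_one' he1 y k]

end CStarAlgebra

section Integral

variable {X : Type*} [MeasurableSpace X] {μ : Measure X}

lemma norm_integral_sub_le_of_forall {E : Type*} [NormedAddCommGroup E] [NormedSpace ℝ E]
    [CompleteSpace E] [IsProbabilityMeasure μ] {f : X → E} (hf : Integrable f μ) {b : E} {C : ℝ}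
    (h : ∀ x, ‖f x - b‖ ≤ C) : ‖∫ x, f x ∂μ - b‖ ≤ C := by
  have := norm_integral_le_of_norm_le_const (μ := μ) (Eventually.of_forall h)
  rwa [integral_sub hf (integrable_const b), integral_const, probReal_univ, one_smul,
    mul_one] at this

variable {A : Type*} [NonUnitalNormedRing A] [NormedSpace ℝ A] [CompleteSpace A]
  [IsScalarTower ℝ A A] [SMulCommClass ℝ A A] [IsProbabilityMeasure μ] {f : X → A} {a : A} {C : ℝ}

lemma norm_integral_mul_sub_le (hf : Integrable f μ) (h : ∀ x, ‖f x * a - a‖ ≤ C) :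
    ‖(∫ x, f x ∂μ) * a - a‖ ≤ C := by
  rw [← integral_mul_const_of_integrable hf]
  exact norm_integral_sub_le_of_forall
    (((ContinuousLinearMap.mul ℝ A).flip a).integrable_comp hf) h

lemma norm_mul_integral_sub_le (hf : Integrable f μ) (h : ∀ x, ‖a * f x - a‖ ≤ C) :
    ‖a * (∫ x, f x ∂μ) - a‖ ≤ C := by
  rw [← integral_const_mul_of_integrable hf]
  exact norm_integral_sub_le_of_forall ((ContinuousLinearMap.mul ℝ A a).integrable_comp hf) h

end Integral

namespace StarAlgEquiv

variable {A : Type*} [NonUnitalCStarAlgebra A] (φ : A ≃⋆ₐ[ℂ] A) (x a : A)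

lemma norm_apply_mul_sub : ‖φ x * a - a‖ = ‖x * φ.symm a - φ.symm a‖ := by
  rw [← norm_map φ (x * _ - _), map_sub, map_mul, apply_symm_apply]

lemma norm_mul_apply_sub : ‖a * φ x - a‖ = ‖φ.symm a * x - φ.symm a‖ := by
  rw [← norm_map φ (_ * x - _), map_sub, map_mul, apply_symm_apply]

lemma map_integral {X : Type*} [MeasurableSpace X] {μ : Measure X} (f : X → A) :
    φ (∫ x, f x ∂μ) = ∫ x, φ (f x) ∂μ :=
  (LinearIsometry.integral_comp_comm (⟨φ, norm_map φ⟩ : A →ₗᵢ[ℂ] A) f).symm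

end StarAlgEquiv

section Action

variable {G : Type*} [Group G] {A : Type*} [NonUnitalCStarAlgebra A] {α : G → A ≃⋆ₐ[ℂ] A}

lemma symm_apply_eq_inv_apply (hone : ∀ a, α 1 a = a)
    (hmul : ∀ g h a, α (g * h) a = α g (α h a)) (g : G) (a : A) : (α g).symm a = α g⁻¹ a :=
  (α g).symm_apply_eq.mpr (by rw [← hmul, mul_inv_cancel, hone])

lemma apply_integral_orbit_eq_self [MeasurableSpace G] [MeasurableMul G] (μ : Measure G)
    [μ.IsMulLeftInvariant] (hmul : ∀ g h a, α (g * h) a = α g (α h a)) (h : G) (x : A) :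
    α h (∫ g, α g x ∂μ) = ∫ g, α g x ∂μ := by
  simp_rw [StarAlgEquiv.map_integral, ← hmul]
  exact integral_mul_left_eq_self (fun g => α g x) h

end Action

/-- For a continuous action `α` of a compact group `G` on a C*-algebra `A`,
for every `ε > 0` and finite `F ⊆ A` there is a positive contraction `e ∈ A` with
`sup_{g ∈ G} ‖α_g(e) − e‖ < ε` and `‖ea − ae‖ < ε`, `‖ea − a‖ < ε`, `‖ae − a‖ < ε`
for all `a ∈ F`. -/
theorem stmt9 {G : Type*} [Group G] [TopologicalSpace G] [IsTopologicalGroup G] [CompactSpace G]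
    {A : Type*} [NonUnitalCStarAlgebra A] [PartialOrder A] [StarOrderedRing A]
    (α : G → (A ≃⋆ₐ[ℂ] A))
    (hone : ∀ a : A, α 1 a = a)
    (hmul : ∀ (g h : G) (a : A), α (g * h) a = α g (α h a))
    (hcont : Continuous fun p : G × A => α p.1 p.2)
    (ε : ℝ) (hε : 0 < ε) (F : Finset A) :
    ∃ e : A, 0 ≤ e ∧ ‖e‖ ≤ 1 ∧ (⨆ g : G, ‖α g e - e‖) < ε ∧
      ∀ a ∈ F, ‖e * a - a * e‖ < ε ∧ ‖e * a - a‖ < ε ∧ ‖a * e - a‖ < ε := by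
  borelize G
  let μ := Measure.haarMeasure (⊤ : TopologicalSpace.PositiveCompacts G)
  have : IsProbabilityMeasure μ := ⟨Measure.haarMeasure_self⟩
  obtain ⟨e₀, he₀, he₀_le, happrox⟩ := CStarAlgebra.exists_approximateUnit_of_isCompact
    ((isCompact_univ.prod F.finite_toSet.isCompact).image hcont) (by positivity : 0 < ε / 3)
  have hint : Integrable (fun g => α g e₀) μ :=
    (hcont.comp (Continuous.prodMk_left e₀)).integrable_of_hasCompactSupport
      (.of_compactSpace _)
  have horbit (g : G) {a : A} (ha : a ∈ F) :
      (α g).symm a ∈ (fun p : G × A => α p.1 p.2) '' (Set.univ ×ˢ F) :=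
    ⟨(g⁻¹, a), ⟨trivial, ha⟩, (symm_apply_eq_inv_apply hone hmul g a).symm⟩
  set e := ∫ g, α g e₀ ∂μ
  have hright (a : A) (ha : a ∈ F) : ‖e * a - a‖ ≤ ε / 3 :=
    norm_integral_mul_sub_le hint fun g => by
      rw [StarAlgEquiv.norm_apply_mul_sub]
      exact (happrox _ (horbit g ha)).1.le
  have hleft (a : A) (ha : a ∈ F) : ‖a * e - a‖ ≤ ε / 3 :=
    norm_mul_integral_sub_le hint fun g => by
      rw [StarAlgEquiv.norm_mul_apply_sub]
      exact (happrox _ (horbit g ha)).2.le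
  refine ⟨e, integral_nonneg fun g => map_nonneg (α g) he₀, ?_, ?_, fun a ha =>
    ⟨?_, (hright a ha).trans_lt (by linarith), (hleft a ha).trans_lt (by linarith)⟩⟩
  · simpa using norm_integral_le_of_norm_le_const (μ := μ)
      (Eventually.of_forall fun g => (StarAlgEquiv.norm_map (α g) e₀).trans_le he₀_le)
  · simp [e, apply_integral_orbit_eq_self μ hmul, hε]
  · calc ‖e * a - a * e‖ = ‖(e * a - a) - (a * e - a)‖ := by abel_nf
      _ ≤ ‖e * a - a‖ + ‖a * e - a‖ := norm_sub_le _ _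
      _ < ε := by linarith [hright a ha, hleft a ha]
end
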